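/- Let α₀, α₁ ∈ ℂ with 2α₀ + α₁ = 0, U ⊆ ℂ open, and let (q₁, p₁, q₂, p₂) be differentiable functions on U solving the t-flow of the autonomous system (A1) with parameter α₀: q₁' = q₁² + p₂, p₁' = −2 q₁ p₁ − 3α₀, q₂' = −(1/2) p₂² + p₁, p₂' = q₂, with p₁(t) ≠ 0 for all t ∈ U. Then (q₁ + 3α₀/p₁, p₁, q₂, p₂) solves the same system with parameters (−α₀, α₁ + 4α₀). (This is the Bäcklund transformation s₀ of the affine Weyl group of type A₂^(2) for the autonomous system.) -/

import Mathlib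

/-!
Write `Q = q₁ + 3α₀/p₁`. Since `p₁' = -2q₁p₁ - 3α₀`, the derivative of `3α₀/p₁` is
`3α₀(2q₁p₁ + 3α₀)/p₁² = Q² - q₁²`, so `Q' = Q² + p₂`; and `-2q₁p₁ - 3α₀ = -2Qp₁ + 3α₀`,
which is the `p₁`-equation with `α₀` replaced by `-α₀`. The other two equations do not involve
`q₁` or `α₀`.
-/

/-- `(q₁,p₁,q₂,p₂)` solves the `t`-flow of the autonomous system (A1) with
parameter `α₀` on `U`: `q₁' = q₁² + p₂`, `p₁' = -2q₁p₁ - 3α₀`,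
`q₂' = -(1/2)p₂² + p₁`, `p₂' = q₂`. -/
def SolvesA1 (a0 : ℂ) (U : Set ℂ) (q1 p1 q2 p2 : ℂ → ℂ) : Prop :=
  ∀ t ∈ U,
    HasDerivAt q1 (q1 t ^ 2 + p2 t) t ∧
    HasDerivAt p1 (-2 * q1 t * p1 t - 3 * a0) t ∧
    HasDerivAt q2 (-(1/2) * p2 t ^ 2 + p1 t) t ∧
    HasDerivAt p2 (q2 t) t

theorem HasDerivAt.add_const_div {𝕜 : Type*} [NontriviallyNormedField 𝕜] {q p : 𝕜 → 𝕜}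
    {q' p' c t : 𝕜} (hq : HasDerivAt q q' t) (hp : HasDerivAt p p' t) (hpt : p t ≠ 0) :
    HasDerivAt (fun s => q s + c / p s) (q' - c * p' / p t ^ 2) t :=
  (hq.fun_add ((hasDerivAt_const t c).fun_div hp hpt)).congr_deriv (by ring)

theorem SolvesA1.backlund_s0 {a0 : ℂ} {U : Set ℂ} {q1 p1 q2 p2 : ℂ → ℂ}
    (h : SolvesA1 a0 U q1 p1 q2 p2) (hp : ∀ t ∈ U, p1 t ≠ 0) :
    SolvesA1 (-a0) U (fun t => q1 t + 3 * a0 / p1 t) p1 q2 p2 := by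
  intro t ht
  obtain ⟨hq1, hp1, hq2, hp2⟩ := h t ht
  have hpt := hp t ht
  refine ⟨?_, ?_, hq2, hp2⟩
  · refine (hq1.add_const_div hp1 hpt).congr_deriv ?_
    field_simp
    ring
  · refine hp1.congr_deriv ?_
    field_simp
    ring

theorem stmt16_general (a0 a1 : ℂ) (hrel : 2 * a0 + a1 = 0) (U : Set ℂ)
    (q1 p1 q2 p2 : ℂ → ℂ) (h : SolvesA1 a0 U q1 p1 q2 p2)
    (hp : ∀ t ∈ U, p1 t ≠ 0) :
    SolvesA1 (-a0) U (fun t => q1 t + 3 * a0 / p1 t) p1 q2 p2 ∧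
      2 * (-a0) + (a1 + 4 * a0) = 0 :=
  ⟨h.backlund_s0 hp, by linear_combination hrel⟩

/-- The Bäcklund transformation `s₀` for the autonomous
system (A1): if `(q₁,p₁,q₂,p₂)` solves the `t`-flow of (A1) with parameter `α₀`
(`2α₀ + α₁ = 0`) and `p₁ ≠ 0` on `U`, then `(q₁ + 3α₀/p₁, p₁, q₂, p₂)` solves the
same system with parameters `(-α₀, α₁ + 4α₀)`. -/
theorem stmt16 (a0 a1 : ℂ) (hrel : 2 * a0 + a1 = 0) (U : Set ℂ) (hU : IsOpen U)
    (q1 p1 q2 p2 : ℂ → ℂ) (h : SolvesA1 a0 U q1 p1 q2 p2)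
    (hp : ∀ t ∈ U, p1 t ≠ 0) :
    SolvesA1 (-a0) U (fun t => q1 t + 3 * a0 / p1 t) p1 q2 p2 ∧
      2 * (-a0) + (a1 + 4 * a0) = 0 :=
  stmt16_general a0 a1 hrel U q1 p1 q2 p2 h hp
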